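/- arXiv:math/0303171 — 3 statements merged into one kernel-verified Lean document; each statement's English description precedes it below -/
import Mathlib

section
/- (Smith's lemma for operator sequence spaces) Let E and F be operator sequence spaces with dim F = m < ∞. Then every bounded linear map T : E → F is sequentially bounded, and ‖T‖_sb = ‖T^(m)‖, where T^(m) : Eᵐ → Fᵐ is the m-th amplification and ‖T‖_sb = sup_n ‖T^(n)‖. -/
open Matrix MeasureTheory

noncomputable section

/-- Action of a scalar `m × n` matrix on a column of vectors in `E`. -/
def matVec {E : Type*} [AddCommMonoid E] [Module ℂ E] {m n : ℕ}
    (α : Matrix (Fin m) (Fin n) ℂ) (x : Fin n → E) : Fin m → E :=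
  fun i => ∑ j, α i j • x j

/-- Operator norm of a scalar matrix viewed as a map `ℓ²ₙ → ℓ²ₘ`. -/
noncomputable def matOpNorm {m n : ℕ} (α : Matrix (Fin m) (Fin n) ℂ) : ℝ :=
  ‖LinearMap.toContinuousLinearMap (Matrix.toEuclideanLin α)‖

/-- A sequential norm over a normed space `E`: a norm on each `Eⁿ`, agreeing with the
norm of `E` at level one, and satisfying the three axioms of an operator sequence space. -/
structure SeqNorm (E : Type*) [NormedAddCommGroup E] [NormedSpace ℂ E] where
  N : ∀ n : ℕ, (Fin n → E) → ℝ
  norm_one : ∀ x : Fin 1 → E, N 1 x = ‖x 0‖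
  add_le : ∀ (n : ℕ) (x y : Fin n → E), N n (x + y) ≤ N n x + N n y
  smul_eq : ∀ (n : ℕ) (c : ℂ) (x : Fin n → E), N n (c • x) = ‖c‖ * N n x
  eq_zero : ∀ (n : ℕ) (x : Fin n → E), N n x = 0 → x = 0
  append_zero : ∀ (m n : ℕ) (x : Fin m → E),
    N (m + n) (Fin.append x (0 : Fin n → E)) = N m x
  append_sq : ∀ (m n : ℕ) (x : Fin m → E) (y : Fin n → E),
    N (m + n) (Fin.append x y) ^ 2 ≤ N m x ^ 2 + N n y ^ 2
  matrix_le : ∀ (m n : ℕ) (α : Matrix (Fin m) (Fin n) ℂ) (x : Fin n → E),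
    N m (matVec α x) ≤ matOpNorm α * N n x

/-- `c` bounds the `n`-th amplification of `T` with respect to sequential norms on `E` and `F`. -/
def AmpBound {E F : Type*} [NormedAddCommGroup E] [NormedSpace ℂ E]
    [NormedAddCommGroup F] [NormedSpace ℂ F]
    (SE : SeqNorm E) (SF : SeqNorm F) (T : E →L[ℂ] F) (n : ℕ) (c : ℝ) : Prop :=
  ∀ x : Fin n → E, SF.N n (fun j => T (x j)) ≤ c * SE.N n x

/-! Fix `x ∈ Eⁿ` and let `S : ℓ²ₙ → F`, `v ↦ ∑ vⱼ • T xⱼ`. Then `S` factors through the orthogonal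
projection onto `(ker S)ᗮ`, a subspace of dimension `r ≤ dim F = m`. Writing that projection as
`β βᴴ` with an `n × r` isometry `β` gives `T⁽ⁿ⁾x = β • T⁽ʳ⁾(βᴴ • x)`, and since `‖β‖, ‖βᴴ‖ ≤ 1` the
matrix axiom yields `‖T⁽ⁿ⁾x‖ ≤ ‖T⁽ʳ⁾‖ ‖x‖ ≤ ‖T⁽ᵐ⁾‖ ‖x‖`, the last step by padding with zeros.
Finally `‖T⁽ᵐ⁾‖ ≤ m ‖T‖` by the triangle inequality. -/

section MatOpNorm

open scoped Matrix.Norms.L2Operator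

variable {m n : ℕ}

lemma matOpNorm_conjTranspose (α : Matrix (Fin m) (Fin n) ℂ) : matOpNorm αᴴ = matOpNorm α :=
  Matrix.l2_opNorm_conjTranspose α

lemma matOpNorm_le_one_of_conjTranspose_mul_self_eq_one {α : Matrix (Fin m) (Fin n) ℂ}
    (h : αᴴ * α = 1) : matOpNorm α ≤ 1 := by
  have hone : ‖(1 : Matrix (Fin n) (Fin n) ℂ)‖ ≤ 1 := by
    rw [Matrix.cstar_norm_def, map_one]
    exact ContinuousLinearMap.norm_id_le
  have hsq : ‖α‖ * ‖α‖ ≤ 1 := by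
    rw [← Matrix.l2_opNorm_conjTranspose_mul_self, h]; exact hone
  change ‖α‖ ≤ 1
  nlinarith [norm_nonneg α]

lemma matOpNorm_single_col_le_one (j : Fin m) :
    matOpNorm (Matrix.single j (0 : Fin 1) (1 : ℂ)) ≤ 1 :=
  matOpNorm_le_one_of_conjTranspose_mul_self_eq_one <| by
    rw [Matrix.conjTranspose_single, Matrix.single_mul_single_same]
    ext a b; fin_cases a; fin_cases b; simp

lemma matOpNorm_single_row_le_one (j : Fin n) :
    matOpNorm (Matrix.single (0 : Fin 1) j (1 : ℂ)) ≤ 1 := by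
  have h := matOpNorm_conjTranspose (Matrix.single j (0 : Fin 1) (1 : ℂ))
  rw [Matrix.conjTranspose_single, star_one] at h
  exact h ▸ matOpNorm_single_col_le_one j

end MatOpNorm

section MatVec

variable {E F : Type*} [AddCommGroup E] [Module ℂ E] [AddCommGroup F] [Module ℂ F] {m n : ℕ}

lemma map_matVec {G : Type*} [FunLike G E F] [LinearMapClass G ℂ E F] (T : G)
    (α : Matrix (Fin m) (Fin n) ℂ) (x : Fin n → E) :
    (fun i => T (matVec α x i)) = matVec α (fun j => T (x j)) := by
  funext i
  simp [matVec, map_sum]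

lemma matVec_single_row (j : Fin n) (x : Fin n → E) :
    matVec (Matrix.single (0 : Fin 1) j (1 : ℂ)) x = fun _ => x j := by
  funext i
  fin_cases i
  simp [matVec, Matrix.single_apply]

lemma matVec_single_col (j : Fin m) (y : E) :
    matVec (Matrix.single j (0 : Fin 1) (1 : ℂ)) (fun _ => y) = Pi.single j y := by
  funext i
  by_cases h : i = j
  · subst h; simp [matVec]
  · simp [matVec, h, Ne.symm h]

end MatVec

lemma LinearMap.apply_starProjection_orthogonal_ker {𝕜 E F : Type*} [RCLike 𝕜]
    [NormedAddCommGroup E] [InnerProductSpace 𝕜 E] [FiniteDimensional 𝕜 E]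
    [AddCommGroup F] [Module 𝕜 F] (S : E →ₗ[𝕜] F) (v : E) :
    S ((LinearMap.ker S)ᗮ.starProjection v) = S v := by
  have hker : v - (LinearMap.ker S)ᗮ.starProjection v ∈ LinearMap.ker S := by
    simpa only [Submodule.orthogonal_orthogonal] using
      (LinearMap.ker S)ᗮ.sub_starProjection_mem_orthogonal v
  rw [LinearMap.mem_ker, map_sub, sub_eq_zero] at hker
  exact hker.symm

lemma exists_isometry_matVec_conjTranspose_eq {F : Type*} [AddCommGroup F] [Module ℂ F]
    [FiniteDimensional ℂ F] {n : ℕ} (y : Fin n → F) :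
    ∃ r ≤ Module.finrank ℂ F, ∃ β : Matrix (Fin n) (Fin r) ℂ,
      βᴴ * β = 1 ∧ matVec β (matVec βᴴ y) = y := by
  let S := (EuclideanSpace.basisFun (Fin n) ℂ).toBasis.constr ℂ y
  have hS : ∀ v : EuclideanSpace ℂ (Fin n), S v = ∑ i, v i • y i := fun v => by
    simp [S]
  let K := (LinearMap.ker S)ᗮ
  let b := stdOrthonormalBasis ℂ K
  -- conjugated so that `matVec βᴴ y` lists the values of `S` on the basis `b`
  let β : Matrix (Fin n) (Fin (Module.finrank ℂ K)) ℂ :=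
    Matrix.of fun i k => star ((b k : EuclideanSpace ℂ (Fin n)) i)
  refine ⟨Module.finrank ℂ K, ?_, β, ?_, ?_⟩
  · have hK := Submodule.finrank_add_finrank_orthogonal (LinearMap.ker S)
    have hrange := LinearMap.finrank_range_add_finrank_ker S
    have := Submodule.finrank_le (LinearMap.range S)
    show Module.finrank ℂ (LinearMap.ker S)ᗮ ≤ _
    omega
  · ext k l
    have horth := orthonormal_iff_ite.mp b.orthonormal l k
    simp only [Submodule.coe_inner, PiLp.inner_apply, RCLike.inner_apply] at horth
    simp only [Matrix.mul_apply, Matrix.one_apply, Matrix.conjTranspose_apply, β, Matrix.of_apply,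
      star_star]
    exact horth.trans (if_congr eq_comm rfl rfl)
  · have hcol : matVec βᴴ y = fun k => S (b k) := by
      funext k
      simp [matVec, β, hS]
    funext j
    rw [hcol]
    simp only [matVec, β, Matrix.of_apply]
    calc ∑ k, star ((b k : EuclideanSpace ℂ (Fin n)) j) • S (b k)
        = S (K.starProjection (EuclideanSpace.single j 1)) := by
          rw [Submodule.starProjection_apply, b.orthogonalProjectionOnto_apply_eq_sum]
          simp [EuclideanSpace.inner_single_right, map_sum]
      _ = S (EuclideanSpace.single j 1) := S.apply_starProjection_orthogonal_ker _
      _ = y j := by simp [hS]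

namespace SeqNorm

variable {E : Type*} [NormedAddCommGroup E] [NormedSpace ℂ E] (S : SeqNorm E) {n : ℕ}

lemma N_zero (n : ℕ) : S.N n 0 = 0 := by
  simpa using S.smul_eq n 0 0

lemma N_nonneg (x : Fin n → E) : 0 ≤ S.N n x := by
  have h := S.add_le n x (-x)
  have hneg : S.N n (-x) = S.N n x := by simpa using S.smul_eq n (-1) x
  rw [add_neg_cancel, N_zero, hneg] at h
  linarith

lemma N_sum_le {ι : Type*} (s : Finset ι) (x : ι → Fin n → E) :
    S.N n (∑ i ∈ s, x i) ≤ ∑ i ∈ s, S.N n (x i) :=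
  Finset.le_sum_of_subadditive (S.N n) (S.N_zero n).le (S.add_le n) s x

lemma N_matVec_le {m : ℕ} {α : Matrix (Fin m) (Fin n) ℂ} (hα : matOpNorm α ≤ 1) (x : Fin n → E) :
    S.N m (matVec α x) ≤ S.N n x :=
  (S.matrix_le m n α x).trans (mul_le_of_le_one_left (S.N_nonneg x) hα)

lemma norm_le_N (x : Fin n → E) (j : Fin n) : ‖x j‖ ≤ S.N n x := by
  simpa [matVec_single_row, S.norm_one] using S.N_matVec_le (matOpNorm_single_row_le_one j) x

lemma N_single_le (j : Fin n) (y : E) : S.N n (Pi.single j y) ≤ ‖y‖ := by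
  simpa [matVec_single_col, S.norm_one] using
    S.N_matVec_le (matOpNorm_single_col_le_one j) (fun _ => y)

end SeqNorm

namespace AmpBound

variable {E F : Type*} [NormedAddCommGroup E] [NormedSpace ℂ E]
  [NormedAddCommGroup F] [NormedSpace ℂ F] {SE : SeqNorm E} {SF : SeqNorm F} {T : E →L[ℂ] F}
  {c : ℝ}

lemma of_le {k l : ℕ} (hkl : k ≤ l) (h : AmpBound SE SF T l c) : AmpBound SE SF T k c := by
  obtain ⟨d, rfl⟩ := Nat.exists_eq_add_of_le hkl
  intro x
  have hpad : (fun j => T (Fin.append x (0 : Fin d → E) j))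
      = Fin.append (fun j => T (x j)) (0 : Fin d → F) := by
    funext j
    refine Fin.addCases (fun i => ?_) (fun i => ?_) j <;> simp
  simpa [hpad, SF.append_zero, SE.append_zero] using h (Fin.append x 0)

end AmpBound

section Amplification

variable {E F : Type*} [NormedAddCommGroup E] [NormedSpace ℂ E]
  [NormedAddCommGroup F] [NormedSpace ℂ F] (SE : SeqNorm E) (SF : SeqNorm F) (T : E →L[ℂ] F)

lemma ampBound_natCast_mul_opNorm (n : ℕ) : AmpBound SE SF T n (n * ‖T‖) := by
  intro x
  calc SF.N n (fun j => T (x j)) = SF.N n (∑ j, Pi.single j (T (x j))) := by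
        rw [Finset.univ_sum_single]
    _ ≤ ∑ j, SF.N n (Pi.single j (T (x j))) := SF.N_sum_le _ _
    _ ≤ ∑ j : Fin n, ‖T‖ * SE.N n x := Finset.sum_le_sum fun j _ =>
        (SF.N_single_le j _).trans <| (T.le_opNorm (x j)).trans <|
          mul_le_mul_of_nonneg_left (SE.norm_le_N x j) (norm_nonneg T)
    _ = n * ‖T‖ * SE.N n x := by simp [mul_assoc]

lemma ampBound_of_ampBound_finrank [FiniteDimensional ℂ F] {c : ℝ} (hc : 0 ≤ c)
    (h : AmpBound SE SF T (Module.finrank ℂ F) c) (n : ℕ) : AmpBound SE SF T n c := by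
  intro x
  obtain ⟨r, hr, β, hβ, hTx⟩ := exists_isometry_matVec_conjTranspose_eq fun j => T (x j)
  have hβ_le : matOpNorm β ≤ 1 := matOpNorm_le_one_of_conjTranspose_mul_self_eq_one hβ
  have hβH_le : matOpNorm βᴴ ≤ 1 := (matOpNorm_conjTranspose β).trans_le hβ_le
  calc SF.N n (fun j => T (x j)) = SF.N n (matVec β fun k => T (matVec βᴴ x k)) := by
        rw [map_matVec T, hTx]
    _ ≤ SF.N r fun k => T (matVec βᴴ x k) := SF.N_matVec_le hβ_le _
    _ ≤ c * SE.N r (matVec βᴴ x) := h.of_le hr _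
    _ ≤ c * SE.N n x := mul_le_mul_of_nonneg_left (SE.N_matVec_le hβH_le x) hc

end Amplification

theorem smith_lemma_general {E F : Type*} [NormedAddCommGroup E] [NormedSpace ℂ E]
    [NormedAddCommGroup F] [NormedSpace ℂ F]
    (SE : SeqNorm E) (SF : SeqNorm F) (m : ℕ)
    [FiniteDimensional ℂ F] (hdim : Module.finrank ℂ F = m)
    (T : E →L[ℂ] F) :
    (∃ c : ℝ, 0 ≤ c ∧ ∀ n : ℕ, AmpBound SE SF T n c) ∧
    sInf {c : ℝ | 0 ≤ c ∧ ∀ n : ℕ, AmpBound SE SF T n c} =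
      sInf {c : ℝ | 0 ≤ c ∧ AmpBound SE SF T m c} := by
  subst hdim
  have hall : ∀ c, 0 ≤ c → AmpBound SE SF T (Module.finrank ℂ F) c → ∀ n, AmpBound SE SF T n c :=
    fun c hc h => ampBound_of_ampBound_finrank SE SF T hc h
  refine ⟨⟨_, by positivity, hall _ (by positivity) (ampBound_natCast_mul_opNorm SE SF T _)⟩, ?_⟩
  congr 1
  ext c
  exact ⟨fun ⟨hc, h⟩ => ⟨hc, h _⟩, fun ⟨hc, h⟩ => ⟨hc, hall c hc h⟩⟩

/-- Smith's lemma for operator sequence spaces: if `dim F = m < ∞`, then every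
bounded linear `T : E → F` is sequentially bounded and `‖T‖_sb = ‖T^(m)‖`. -/
theorem smith_lemma {E F : Type*} [NormedAddCommGroup E] [NormedSpace ℂ E]
    [NormedAddCommGroup F] [NormedSpace ℂ F] [CompleteSpace E] [CompleteSpace F]
    (SE : SeqNorm E) (SF : SeqNorm F) (m : ℕ)
    [FiniteDimensional ℂ F] (hdim : Module.finrank ℂ F = m)
    (T : E →L[ℂ] F) :
    (∃ c : ℝ, 0 ≤ c ∧ ∀ n : ℕ, AmpBound SE SF T n c) ∧
    sInf {c : ℝ | 0 ≤ c ∧ ∀ n : ℕ, AmpBound SE SF T n c} =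
      sInf {c : ℝ | 0 ≤ c ∧ AmpBound SE SF T m c} :=
  smith_lemma_general SE SF m hdim T
end
end

section
/- Let E be an operator sequence space. Then the dual space E* coincides isometrically with the space SB(E, ℂ) of sequentially bounded maps from E to ℂ (where ℂ carries its unique operator sequence space structure with ℂⁿ = ℓ²ₙ); that is, for every bounded linear functional φ on E, sup_n ‖φ^(n) : Eⁿ → ℓ²ₙ‖ = ‖φ‖. -/
open Matrix MeasureTheory

noncomputable section

lemma SeqNorm.nonneg {E : Type*} [NormedAddCommGroup E] [NormedSpace ℂ E]
    (S : SeqNorm E) (n : ℕ) (x : Fin n → E) : 0 ≤ S.N n x := by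
  have h0 : S.N n 0 = 0 := by
    have := S.smul_eq n 0 x
    simpa using this
  have h1 : S.N n (-x) = S.N n x := by
    have := S.smul_eq n (-1) x
    simpa using this
  have h2 := S.add_le n x (-x)
  rw [add_neg_cancel, h0, h1] at h2
  linarith

lemma row_matOpNorm_le {n : ℕ} (v : Fin n → ℂ) :
    matOpNorm (Matrix.of (fun (_ : Fin 1) j => v j)) ≤ Real.sqrt (∑ j, ‖v j‖ ^ 2) := by
  apply ContinuousLinearMap.opNorm_le_bound _ (Real.sqrt_nonneg _)
  intro w
  have hcomp : (LinearMap.toContinuousLinearMap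
      (Matrix.toEuclideanLin (Matrix.of (fun (_ : Fin 1) j => v j))) w : EuclideanSpace ℂ (Fin 1))
      = (WithLp.equiv 2 (Fin 1 → ℂ)).symm
        ((Matrix.of (fun (_ : Fin 1) j => v j)) *ᵥ (WithLp.equiv 2 (Fin n → ℂ)) w) := rfl
  rw [hcomp]
  have hnorm1 : ∀ y : EuclideanSpace ℂ (Fin 1), ‖y‖ = ‖y 0‖ := by
    intro y
    rw [EuclideanSpace.norm_eq]
    simp [Real.sqrt_sq_eq_abs]
  rw [hnorm1]
  -- the 0-th entry is ∑ j, v j * w j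
  have hentry : ((WithLp.equiv 2 (Fin 1 → ℂ)).symm
      ((Matrix.of (fun (_ : Fin 1) j => v j)) *ᵥ (WithLp.equiv 2 (Fin n → ℂ)) w)) 0
      = ∑ j, v j * w j := by
    simp [Matrix.mulVec, dotProduct]
  rw [hentry]
  -- Cauchy-Schwarz via inner product on EuclideanSpace
  set u : EuclideanSpace ℂ (Fin n) := (WithLp.equiv 2 (Fin n → ℂ)).symm (fun j => (starRingEnd ℂ) (v j))
  have hinner : (inner ℂ u w : ℂ) = ∑ j, v j * w j := by
    simp [u, PiLp.inner_apply, mul_comm]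
  calc ‖∑ j, v j * w j‖ = ‖(inner ℂ u w : ℂ)‖ := by rw [hinner]
    _ ≤ ‖u‖ * ‖w‖ := norm_inner_le_norm u w
    _ = Real.sqrt (∑ j, ‖v j‖ ^ 2) * ‖w‖ := by
        congr 1
        rw [EuclideanSpace.norm_eq]
        congr 1
        apply Finset.sum_congr rfl
        intro j _
        simp [u]

/-- `E* = SB(E, ℂ)` isometrically: for a bounded functional `φ` on an operator
sequence space `E`, the least constant bounding all amplifications `φ^(n) : Eⁿ → ℓ²ₙ` is `‖φ‖`. -/
theorem dual_eq_sb {E : Type*} [NormedAddCommGroup E] [NormedSpace ℂ E] [CompleteSpace E]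
    (S : SeqNorm E) (φ : E →L[ℂ] ℂ) :
    IsLeast {c : ℝ | 0 ≤ c ∧ ∀ (n : ℕ) (x : Fin n → E),
      Real.sqrt (∑ j, ‖φ (x j)‖ ^ 2) ≤ c * S.N n x} ‖φ‖ := by
  constructor
  · refine ⟨norm_nonneg φ, ?_⟩
    intro n x
    set s : ℝ := ∑ j, ‖φ (x j)‖ ^ 2 with hs
    have hs0 : 0 ≤ s := Finset.sum_nonneg fun j _ => sq_nonneg _
    rcases eq_or_lt_of_le hs0 with h | h
    · rw [← h, Real.sqrt_zero]
      exact mul_nonneg (norm_nonneg φ) (S.nonneg n x)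
    -- main case s > 0
    set v : Fin n → ℂ := fun j => (starRingEnd ℂ) (φ (x j)) with hv
    set α : Matrix (Fin 1) (Fin n) ℂ := Matrix.of (fun _ j => v j) with hα
    set y : Fin 1 → E := matVec α x with hy
    have hφy : φ (y 0) = (s : ℂ) := by
      simp only [hy, matVec, map_sum, hα, hv, Matrix.of_apply, hs]
      push_cast
      apply Finset.sum_congr rfl
      intro j _
      rw [ContinuousLinearMap.map_smul, smul_eq_mul, mul_comm, Complex.mul_conj]
      rw [Complex.normSq_eq_norm_sq]
      norm_cast
    have h1 : s ≤ ‖φ‖ * S.N 1 y := by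
      have := φ.le_opNorm (y 0)
      rw [hφy] at this
      simp only [Complex.norm_real, Real.norm_eq_abs, abs_of_nonneg hs0] at this
      rw [S.norm_one]
      exact this
    have h2 : S.N 1 y ≤ Real.sqrt s * S.N n x := by
      calc S.N 1 y ≤ matOpNorm α * S.N n x := S.matrix_le 1 n α x
        _ ≤ Real.sqrt s * S.N n x := by
            apply mul_le_mul_of_nonneg_right _ (S.nonneg n x)
            have := row_matOpNorm_le v
            have heq : (∑ j, ‖v j‖ ^ 2) = s := by
              apply Finset.sum_congr rfl
              intro j _
              simp [hv, hs]
            rwa [heq] at this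
    have hsqrt : 0 < Real.sqrt s := Real.sqrt_pos.mpr h
    have key : s ≤ ‖φ‖ * (Real.sqrt s * S.N n x) :=
      h1.trans (mul_le_mul_of_nonneg_left h2 (norm_nonneg φ))
    have hss : Real.sqrt s * Real.sqrt s = s := Real.mul_self_sqrt hs0
    nlinarith [key, hss, hsqrt]
  · rintro c ⟨hc, h⟩
    apply ContinuousLinearMap.opNorm_le_bound _ hc
    intro x
    have := h 1 (fun _ => x)
    rw [S.norm_one] at this
    simpa [Real.sqrt_sq (norm_nonneg _)] using this
end
end

section
/- Let E be a Banach space and for n ≥ 1 define on Eⁿ the maximal operator sequence norm: ‖x‖ₙ = inf{ ‖α‖ · (Σ_{j=1}^m ‖y_j‖²)^{1/2} : m ∈ ℕ, α ∈ M_{n,m}, y ∈ Eᵐ, x = αy }. Then this is a sequential norm on E: it satisfies ‖[x;0]‖_{m+n} = ‖x‖ₘ, ‖[x;y]‖²_{m+n} ≤ ‖x‖ₘ² + ‖y‖ₙ², and ‖βx‖ₘ ≤ ‖β‖‖x‖ₙ for β ∈ M_{m,n}, and ‖·‖₁ agrees with the norm of E. -/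
open Matrix MeasureTheory

noncomputable section

/-- The minimal operator sequence norm at level `n`:
`‖x‖ₙ = sup{ ‖Σⱼ ξⱼ xⱼ‖ : ξ ∈ ℓ²ₙ, ‖ξ‖₂ ≤ 1 }`, identifying `min(E)ⁿ = B(ℓ²ₙ, E)`. -/
noncomputable def minSeqNorm {E : Type*} [NormedAddCommGroup E] [NormedSpace ℂ E]
    (n : ℕ) (x : Fin n → E) : ℝ :=
  sSup {r : ℝ | ∃ ξ : Fin n → ℂ, (∑ j, ‖ξ j‖ ^ 2) ≤ 1 ∧ r = ‖∑ j, ξ j • x j‖}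

/-- The maximal operator sequence norm at level `n`:
`‖x‖ₙ = inf{ ‖α‖ (Σⱼ ‖yⱼ‖²)^{1/2} : x = αy }`. -/
noncomputable def maxSeqNorm {E : Type*} [NormedAddCommGroup E] [NormedSpace ℂ E]
    (n : ℕ) (x : Fin n → E) : ℝ :=
  sInf {r : ℝ | ∃ (m : ℕ) (α : Matrix (Fin n) (Fin m) ℂ) (y : Fin m → E),
    x = matVec α y ∧ r = matOpNorm α * Real.sqrt (∑ j, ‖y j‖ ^ 2)}

/-!
Rescaling a factorization `x = α y` to one with `‖α‖ ≤ 1` shows that `‖x‖ₙ` is the infimum of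
`‖y‖₂` over factorizations through contractions. Composing contractions gives the matrix
inequality, block-diagonal contractions give the `ℓ²`-inequality for `(x; y)`, and level one comes
from `‖(α y)ᵢ‖ ≤ ‖α‖ ‖y‖₂` (Cauchy–Schwarz against the `i`-th row of `α`, whose `ℓ²`-norm is at
most `‖α‖`). Homogeneity, zero padding and the triangle inequality then hold for any family of
nonnegative functions satisfying the matrix and `ℓ²`-inequalities.
-/

-- With this instance `‖α‖` is definitionally `matOpNorm α`.
open scoped Matrix.Norms.L2Operator
open WithLp

namespace PiLp

variable {E : Type*} [SeminormedAddCommGroup E]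

lemma sqrt_sum_norm_sq_eq {k : ℕ} (y : Fin k → E) : √(∑ j, ‖y j‖ ^ 2) = ‖toLp 2 y‖ :=
  (norm_eq_of_L2 _).symm

lemma norm_toLp_append_sq {k l : ℕ} (y : Fin k → E) (z : Fin l → E) :
    ‖toLp 2 (Fin.append y z)‖ ^ 2 = ‖toLp 2 y‖ ^ 2 + ‖toLp 2 z‖ ^ 2 := by
  simp only [norm_sq_eq_of_L2, Fin.sum_univ_add, Fin.append_left, Fin.append_right]

end PiLp

open PiLp

lemma le_of_forall_pos_le_of_continuous {f : ℝ → ℝ} (hf : Continuous f) {b c : ℝ}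
    (hc : f 0 = c) (h : ∀ ε > 0, b ≤ f ε) : b ≤ c :=
  ge_of_tendsto ((hf.tendsto' 0 c hc).mono_left nhdsWithin_le_nhds)
    (eventually_nhdsWithin_of_forall (s := Set.Ioi 0) h)

lemma Fin.exists_eq_append {α : Type*} {m n : ℕ} (ξ : Fin (m + n) → α) :
    ∃ ξ₁ ξ₂, ξ = Fin.append ξ₁ ξ₂ :=
  ⟨_, _, Fin.append_castAdd_natAdd.symm⟩

namespace Matrix

section Blocks

variable {R : Type*}

def hcat {n m₁ m₂ : ℕ} (α : Matrix (Fin n) (Fin m₁) R) (β : Matrix (Fin n) (Fin m₂) R) :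
    Matrix (Fin n) (Fin (m₁ + m₂)) R :=
  of fun i => Fin.append (α i) (β i)

-- The rows are eta-expanded so that `Fin.append` is taken at the function type `Fin n → R`.
def vcat {m₁ m₂ n : ℕ} (α : Matrix (Fin m₁) (Fin n) R) (β : Matrix (Fin m₂) (Fin n) R) :
    Matrix (Fin (m₁ + m₂)) (Fin n) R :=
  of (Fin.append (fun i => α i) (fun i => β i))

lemma hcat_mulVec [NonUnitalNonAssocSemiring R] {n m₁ m₂ : ℕ} (α : Matrix (Fin n) (Fin m₁) R)
    (β : Matrix (Fin n) (Fin m₂) R) (ξ : Fin m₁ → R) (η : Fin m₂ → R) :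
    hcat α β *ᵥ Fin.append ξ η = α *ᵥ ξ + β *ᵥ η := by
  ext i
  simp [hcat, mulVec, dotProduct, Fin.sum_univ_add]

lemma vcat_mulVec [NonUnitalNonAssocSemiring R] {m₁ m₂ n : ℕ} (α : Matrix (Fin m₁) (Fin n) R)
    (β : Matrix (Fin m₂) (Fin n) R) (ξ : Fin n → R) :
    vcat α β *ᵥ ξ = Fin.append (α *ᵥ ξ) (β *ᵥ ξ) := by
  ext i
  refine Fin.addCases (fun i => ?_) (fun i => ?_) i <;> simp [vcat, mulVec]

end Blocks

section L2OpNorm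

variable {𝕜 : Type*} [RCLike 𝕜] {m n : ℕ}

lemma norm_toLp_mulVec_le (α : Matrix (Fin m) (Fin n) 𝕜) (ξ : Fin n → 𝕜) :
    ‖toLp 2 (α *ᵥ ξ)‖ ≤ ‖α‖ * ‖toLp 2 ξ‖ :=
  α.l2_opNorm_mulVec (toLp 2 ξ)

lemma l2_opNorm_le_of_forall {α : Matrix (Fin m) (Fin n) 𝕜} {c : ℝ} (hc : 0 ≤ c)
    (h : ∀ ξ, ‖toLp 2 (α *ᵥ ξ)‖ ≤ c * ‖toLp 2 ξ‖) : ‖α‖ ≤ c := by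
  rw [l2_opNorm_def]
  exact ContinuousLinearMap.opNorm_le_bound _ hc fun ξ => h (ofLp ξ)

lemma l2_opNorm_one_le : ‖(1 : Matrix (Fin n) (Fin n) 𝕜)‖ ≤ 1 :=
  l2_opNorm_le_of_forall zero_le_one fun ξ => by simp

lemma norm_toLp_row_le (α : Matrix (Fin m) (Fin n) 𝕜) (i : Fin m) : ‖toLp 2 (α i)‖ ≤ ‖α‖ := by
  have h := norm_toLp_mulVec_le αᴴ (Pi.single i 1)
  rw [l2_opNorm_conjTranspose, mulVec_single_one] at h
  simpa [EuclideanSpace.norm_eq, col] using h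

lemma norm_toLp_mulVec_sq_le {α : Matrix (Fin m) (Fin n) 𝕜} {c : ℝ} (hα : ‖α‖ ≤ c)
    (ξ : Fin n → 𝕜) : ‖toLp 2 (α *ᵥ ξ)‖ ^ 2 ≤ c ^ 2 * ‖toLp 2 ξ‖ ^ 2 := by
  rw [← mul_pow]
  exact pow_le_pow_left₀ (norm_nonneg _) ((norm_toLp_mulVec_le α ξ).trans (by gcongr)) 2

lemma l2_opNorm_vcat_le {m₁ m₂ : ℕ} (α : Matrix (Fin m₁) (Fin n) 𝕜)
    (β : Matrix (Fin m₂) (Fin n) 𝕜) : ‖vcat α β‖ ≤ √(‖α‖ ^ 2 + ‖β‖ ^ 2) := by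
  refine l2_opNorm_le_of_forall (by positivity) fun ξ => ?_
  rw [← sq_le_sq₀ (by positivity) (by positivity), vcat_mulVec, norm_toLp_append_sq, mul_pow,
    Real.sq_sqrt (by positivity), add_mul]
  exact add_le_add (norm_toLp_mulVec_sq_le le_rfl ξ) (norm_toLp_mulVec_sq_le le_rfl ξ)

lemma l2_opNorm_hcat_le {m₁ m₂ : ℕ} (α : Matrix (Fin m) (Fin m₁) 𝕜)
    (β : Matrix (Fin m) (Fin m₂) 𝕜) : ‖hcat α β‖ ≤ √(‖α‖ ^ 2 + ‖β‖ ^ 2) := by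
  refine l2_opNorm_le_of_forall (by positivity) fun ξ => ?_
  obtain ⟨ξ₁, ξ₂, rfl⟩ := Fin.exists_eq_append ξ
  rw [hcat_mulVec, toLp_add]
  calc ‖toLp 2 (α *ᵥ ξ₁) + toLp 2 (β *ᵥ ξ₂)‖
      ≤ ‖α‖ * ‖toLp 2 ξ₁‖ + ‖β‖ * ‖toLp 2 ξ₂‖ :=
        (norm_add_le _ _).trans (add_le_add (norm_toLp_mulVec_le _ _) (norm_toLp_mulVec_le _ _))
    _ ≤ √(‖α‖ ^ 2 + ‖β‖ ^ 2) * √(‖toLp 2 ξ₁‖ ^ 2 + ‖toLp 2 ξ₂‖ ^ 2) := by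
        simpa [Fin.sum_univ_two] using
          Real.sum_mul_le_sqrt_mul_sqrt Finset.univ ![‖α‖, ‖β‖] ![‖toLp 2 ξ₁‖, ‖toLp 2 ξ₂‖]
    _ = √(‖α‖ ^ 2 + ‖β‖ ^ 2) * ‖toLp 2 (Fin.append ξ₁ ξ₂)‖ := by
        rw [← norm_toLp_append_sq, Real.sqrt_sq (norm_nonneg _)]

lemma l2_opNorm_smul_one_le (c : 𝕜) : ‖(c • 1 : Matrix (Fin n) (Fin n) 𝕜)‖ ≤ ‖c‖ :=
  (norm_smul_le _ _).trans (mul_le_of_le_one_right (norm_nonneg _) l2_opNorm_one_le)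

lemma l2_opNorm_hcat_smul_one_le (s t : 𝕜) :
    ‖hcat (s • 1 : Matrix (Fin n) (Fin n) 𝕜) (t • 1 : Matrix (Fin n) (Fin n) 𝕜)‖
      ≤ √(‖s‖ ^ 2 + ‖t‖ ^ 2) := by
  refine (l2_opNorm_hcat_le _ _).trans (Real.sqrt_le_sqrt (add_le_add ?_ ?_)) <;>
    exact pow_le_pow_left₀ (norm_nonneg _) (l2_opNorm_smul_one_le _) 2

lemma l2_opNorm_blockDiag_le {m₁ m₂ n₁ n₂ : ℕ} (α : Matrix (Fin m₁) (Fin n₁) 𝕜)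
    (β : Matrix (Fin m₂) (Fin n₂) 𝕜) :
    ‖vcat (hcat α 0) (hcat 0 β)‖ ≤ max ‖α‖ ‖β‖ := by
  refine l2_opNorm_le_of_forall (by positivity) fun ξ => ?_
  obtain ⟨ξ₁, ξ₂, rfl⟩ := Fin.exists_eq_append ξ
  rw [← sq_le_sq₀ (by positivity) (by positivity), vcat_mulVec, hcat_mulVec, hcat_mulVec,
    zero_mulVec, zero_mulVec, add_zero, zero_add, mul_pow, norm_toLp_append_sq,
    norm_toLp_append_sq, mul_add]
  exact add_le_add (norm_toLp_mulVec_sq_le (le_max_left _ _) ξ₁)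
    (norm_toLp_mulVec_sq_le (le_max_right _ _) ξ₂)

end L2OpNorm

end Matrix

section MatVec

variable {E : Type*} [AddCommGroup E] [Module ℂ E]

lemma matVec_one {n : ℕ} (x : Fin n → E) : matVec (1 : Matrix (Fin n) (Fin n) ℂ) x = x := by
  ext i
  simp [matVec, one_apply, ite_smul]

lemma matVec_zero {m n : ℕ} (x : Fin n → E) : matVec (0 : Matrix (Fin m) (Fin n) ℂ) x = 0 := by
  ext i
  simp [matVec]

lemma matVec_mul {m n k : ℕ} (β : Matrix (Fin m) (Fin n) ℂ) (α : Matrix (Fin n) (Fin k) ℂ)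
    (y : Fin k → E) : matVec (β * α) y = matVec β (matVec α y) := by
  ext i
  simp only [matVec, mul_apply, Finset.sum_smul, Finset.smul_sum, mul_smul]
  exact Finset.sum_comm

lemma smul_matVec {m n : ℕ} (c : ℂ) (α : Matrix (Fin m) (Fin n) ℂ) (y : Fin n → E) :
    matVec (c • α) y = c • matVec α y := by
  ext i
  simp [matVec, Finset.smul_sum, smul_smul]

lemma matVec_smul {m n : ℕ} (c : ℂ) (α : Matrix (Fin m) (Fin n) ℂ) (y : Fin n → E) :
    matVec α (c • y) = c • matVec α y := by
  ext i
  simp [matVec, Finset.smul_sum, smul_comm c]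

lemma hcat_matVec {n m₁ m₂ : ℕ} (α : Matrix (Fin n) (Fin m₁) ℂ) (β : Matrix (Fin n) (Fin m₂) ℂ)
    (y : Fin m₁ → E) (z : Fin m₂ → E) :
    matVec (hcat α β) (Fin.append y z) = matVec α y + matVec β z := by
  ext i
  simp [matVec, hcat, Fin.sum_univ_add]

lemma vcat_matVec {m₁ m₂ n : ℕ} (α : Matrix (Fin m₁) (Fin n) ℂ) (β : Matrix (Fin m₂) (Fin n) ℂ)
    (y : Fin n → E) : matVec (vcat α β) y = Fin.append (matVec α y) (matVec β y) := by
  ext i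
  refine Fin.addCases (fun i => ?_) (fun i => ?_) i <;> simp [vcat, matVec]

end MatVec

lemma norm_matVec_apply_le {E : Type*} [SeminormedAddCommGroup E] [NormedSpace ℂ E] {m n : ℕ}
    (α : Matrix (Fin m) (Fin n) ℂ) (y : Fin n → E) (i : Fin m) :
    ‖matVec α y i‖ ≤ ‖α‖ * ‖toLp 2 y‖ :=
  calc ‖matVec α y i‖ ≤ ∑ j, ‖α i j‖ * ‖y j‖ :=
        (norm_sum_le _ _).trans_eq (by simp only [norm_smul])
    _ ≤ ‖toLp 2 (α i)‖ * ‖toLp 2 y‖ := by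
        simpa only [← sqrt_sum_norm_sq_eq] using Real.sum_mul_le_sqrt_mul_sqrt _ _ _
    _ ≤ ‖α‖ * ‖toLp 2 y‖ := by gcongr; exact norm_toLp_row_le α i

section SequentialNormAxioms

variable {E : Type*} [AddCommGroup E] [Module ℂ E] {N : ∀ n : ℕ, (Fin n → E) → ℝ}

lemma smul_le_of_matVec_le
    (hN : ∀ {m n} (α : Matrix (Fin m) (Fin n) ℂ) x, N m (matVec α x) ≤ ‖α‖ * N n x)
    (hN₀ : ∀ {n} x, 0 ≤ N n x) {n : ℕ} (c : ℂ) (x : Fin n → E) :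
    N n (c • x) ≤ ‖c‖ * N n x :=
  calc N n (c • x) = N n (matVec (c • (1 : Matrix (Fin n) (Fin n) ℂ)) x) := by
        rw [smul_matVec, matVec_one]
    _ ≤ ‖c • (1 : Matrix (Fin n) (Fin n) ℂ)‖ * N n x := hN _ _
    _ ≤ ‖c‖ * N n x := mul_le_mul_of_nonneg_right (l2_opNorm_smul_one_le c) (hN₀ x)

lemma smul_eq_of_matVec_le
    (hN : ∀ {m n} (α : Matrix (Fin m) (Fin n) ℂ) x, N m (matVec α x) ≤ ‖α‖ * N n x)
    (hN₀ : ∀ {n} x, 0 ≤ N n x) {n : ℕ} (c : ℂ) (x : Fin n → E) :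
    N n (c • x) = ‖c‖ * N n x := by
  rcases eq_or_ne c 0 with rfl | hc
  · simp only [zero_smul, norm_zero, zero_mul]
    exact le_antisymm (by simpa using smul_le_of_matVec_le hN hN₀ 0 x) (hN₀ _)
  refine le_antisymm (smul_le_of_matVec_le hN hN₀ c x) ?_
  calc ‖c‖ * N n x = ‖c‖ * N n (c⁻¹ • c • x) := by rw [inv_smul_smul₀ hc]
    _ ≤ ‖c‖ * (‖c⁻¹‖ * N n (c • x)) := by gcongr; exact smul_le_of_matVec_le hN hN₀ _ _
    _ = N n (c • x) := by rw [norm_inv, mul_inv_cancel_left₀ (norm_ne_zero_iff.mpr hc)]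

lemma append_zero_of_matVec_le
    (hN : ∀ {m n} (α : Matrix (Fin m) (Fin n) ℂ) x, N m (matVec α x) ≤ ‖α‖ * N n x)
    (hN₀ : ∀ {n} x, 0 ≤ N n x) {m n : ℕ} (x : Fin m → E) :
    N (m + n) (Fin.append x 0) = N m x := by
  have hvcat : ‖vcat (1 : Matrix (Fin m) (Fin m) ℂ) (0 : Matrix (Fin n) (Fin m) ℂ)‖ ≤ 1 :=
    (l2_opNorm_vcat_le _ _).trans (by simpa using l2_opNorm_one_le)
  have hhcat : ‖hcat (1 : Matrix (Fin m) (Fin m) ℂ) (0 : Matrix (Fin m) (Fin n) ℂ)‖ ≤ 1 :=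
    (l2_opNorm_hcat_le _ _).trans (by simpa using l2_opNorm_one_le)
  refine le_antisymm ?_ ?_
  · calc N (m + n) (Fin.append x 0) = N (m + n) (matVec (vcat 1 0) x) := by
          rw [vcat_matVec, matVec_one, matVec_zero]
      _ ≤ N m x := (hN _ _).trans (mul_le_of_le_one_left (hN₀ x) hvcat)
  · calc N m x = N m (matVec (hcat 1 0) (Fin.append x (0 : Fin n → E))) := by
          rw [hcat_matVec, matVec_one, matVec_zero, add_zero]
      _ ≤ N (m + n) (Fin.append x 0) := (hN _ _).trans (mul_le_of_le_one_left (hN₀ _) hhcat)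

lemma add_le_mul_append_of_matVec_le
    (hN : ∀ {m n} (α : Matrix (Fin m) (Fin n) ℂ) x, N m (matVec α x) ≤ ‖α‖ * N n x)
    (hN₀ : ∀ {n} x, 0 ≤ N n x) {s t : ℂ} (hs : s ≠ 0) (ht : t ≠ 0) {n : ℕ} (x x' : Fin n → E) :
    N n (x + x') ≤ √(‖s‖ ^ 2 + ‖t‖ ^ 2) * N (n + n) (Fin.append (s⁻¹ • x) (t⁻¹ • x')) :=
  calc N n (x + x') = N n (matVec (hcat (s • 1) (t • 1)) (Fin.append (s⁻¹ • x) (t⁻¹ • x'))) := by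
        rw [hcat_matVec, smul_matVec, smul_matVec, matVec_one, matVec_one, smul_inv_smul₀ hs,
          smul_inv_smul₀ ht]
    _ ≤ _ := (hN _ _).trans (mul_le_mul_of_nonneg_right (l2_opNorm_hcat_smul_one_le s t) (hN₀ _))

/-- With `‖s‖² = N x + ε` and `‖t‖² = N x' + ε`, both factors in
`add_le_mul_append_of_matVec_le` are at most `√(N x + N x' + 2ε)`. -/
lemma add_le_of_append_sq
    (hN : ∀ {m n} (α : Matrix (Fin m) (Fin n) ℂ) x, N m (matVec α x) ≤ ‖α‖ * N n x)
    (hN₀ : ∀ {n} x, 0 ≤ N n x)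
    (happend : ∀ {m n} (x : Fin m → E) (y : Fin n → E),
      N (m + n) (Fin.append x y) ^ 2 ≤ N m x ^ 2 + N n y ^ 2)
    {n : ℕ} (x x' : Fin n → E) : N n (x + x') ≤ N n x + N n x' := by
  refine le_of_forall_pos_le_of_continuous (f := fun ε => N n x + N n x' + 2 * ε) (by fun_prop)
    (by simp) fun ε hε => ?_
  have hsq (r : ℝ) (hr : 0 < r) : ‖((√r : ℝ) : ℂ)‖ ^ 2 = r := by
    rw [Complex.norm_real, Real.norm_of_nonneg (Real.sqrt_nonneg r), Real.sq_sqrt hr.le]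
  have hne (r : ℝ) (hr : 0 < r) : ((√r : ℝ) : ℂ) ≠ 0 := by
    exact_mod_cast (Real.sqrt_pos.mpr hr).ne'
  have hscaled (z : Fin n → E) : N n (((√(N n z + ε) : ℝ) : ℂ)⁻¹ • z) ^ 2 ≤ N n z + ε := by
    have hr : 0 < N n z + ε := by have := hN₀ z; positivity
    rw [smul_eq_of_matVec_le hN hN₀, mul_pow, norm_inv, inv_pow, hsq _ hr, inv_mul_le_iff₀ hr,
      ← sq]
    exact pow_le_pow_left₀ (hN₀ z) (le_add_of_nonneg_right hε.le) 2
  have ha : 0 < N n x + ε := by have := hN₀ x; positivity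
  have hb : 0 < N n x' + ε := by have := hN₀ x'; positivity
  calc N n (x + x')
      ≤ √(N n x + ε + (N n x' + ε)) * √(N n x + ε + (N n x' + ε)) := by
        refine (add_le_mul_append_of_matVec_le hN hN₀ (hne _ ha) (hne _ hb) x x').trans ?_
        rw [hsq _ ha, hsq _ hb]
        gcongr
        exact Real.le_sqrt_of_sq_le ((happend _ _).trans (add_le_add (hscaled x) (hscaled x')))
    _ = N n x + N n x' + 2 * ε := by rw [Real.mul_self_sqrt (by positivity)]; ring

end SequentialNormAxioms

section MaxSeqNorm

variable {E : Type*} [NormedAddCommGroup E] [NormedSpace ℂ E] {m n : ℕ}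

lemma maxSeqNorm_nonneg (x : Fin n → E) : 0 ≤ maxSeqNorm n x :=
  Real.sInf_nonneg <| by
    rintro r ⟨m, α, y, -, rfl⟩
    exact mul_nonneg (norm_nonneg _) (Real.sqrt_nonneg _)

lemma maxSeqNorm_le_of_eq_matVec {x : Fin n → E} {α : Matrix (Fin n) (Fin m) ℂ} {y : Fin m → E}
    (h : x = matVec α y) : maxSeqNorm n x ≤ ‖α‖ * ‖toLp 2 y‖ :=
  csInf_le ⟨0, by rintro r ⟨m, α, y, -, rfl⟩; exact mul_nonneg (norm_nonneg _) (Real.sqrt_nonneg _)⟩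
    ⟨m, α, y, h, by rw [sqrt_sum_norm_sq_eq]; rfl⟩

lemma maxSeqNorm_le_of_norm_le_one {x : Fin n → E} {α : Matrix (Fin n) (Fin m) ℂ}
    {y : Fin m → E} (h : x = matVec α y) (hα : ‖α‖ ≤ 1) : maxSeqNorm n x ≤ ‖toLp 2 y‖ :=
  (maxSeqNorm_le_of_eq_matVec h).trans (mul_le_of_le_one_left (norm_nonneg _) hα)

lemma exists_eq_matVec_of_norm_le_one (x : Fin n → E) {ε : ℝ} (hε : 0 < ε) :
    ∃ (m : ℕ) (α : Matrix (Fin n) (Fin m) ℂ) (y : Fin m → E),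
      x = matVec α y ∧ ‖α‖ ≤ 1 ∧ ‖toLp 2 y‖ < maxSeqNorm n x + ε := by
  have hlt : maxSeqNorm n x < maxSeqNorm n x + ε := lt_add_of_pos_right _ hε
  obtain ⟨_, ⟨m, α, y, rfl, rfl⟩, hlt⟩ :=
    exists_lt_of_csInf_lt (by exact ⟨_, n, 1, x, (matVec_one x).symm, rfl⟩) hlt
  rw [sqrt_sum_norm_sq_eq] at hlt
  rcases eq_or_ne α 0 with rfl | hα
  · refine ⟨m, 0, 0, by rw [matVec_zero, matVec_zero], by simp, ?_⟩
    simpa using add_pos_of_nonneg_of_pos (maxSeqNorm_nonneg _) hε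
  have hα' : (‖α‖ : ℂ) ≠ 0 := by exact_mod_cast norm_ne_zero_iff.mpr hα
  refine ⟨m, (‖α‖ : ℂ)⁻¹ • α, (‖α‖ : ℂ) • y, ?_, ?_, ?_⟩
  · rw [smul_matVec, matVec_smul, inv_smul_smul₀ hα']
  · rw [norm_smul, norm_inv, Complex.norm_real, norm_norm,
      inv_mul_cancel₀ (norm_ne_zero_iff.mpr hα)]
  · rwa [toLp_smul, norm_smul, Complex.norm_real, norm_norm]

lemma norm_apply_le_maxSeqNorm (x : Fin n → E) (i : Fin n) : ‖x i‖ ≤ maxSeqNorm n x := by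
  refine le_of_forall_pos_lt_add fun ε hε => ?_
  obtain ⟨m, α, y, rfl, hα, hy⟩ := exists_eq_matVec_of_norm_le_one x hε
  exact ((norm_matVec_apply_le α y i).trans (mul_le_of_le_one_left (norm_nonneg _) hα)).trans_lt hy

lemma maxSeqNorm_fin_one (x : Fin 1 → E) : maxSeqNorm 1 x = ‖x 0‖ := by
  refine le_antisymm ?_ (norm_apply_le_maxSeqNorm x 0)
  refine (maxSeqNorm_le_of_norm_le_one (matVec_one x).symm l2_opNorm_one_le).trans_eq ?_
  simp [← sqrt_sum_norm_sq_eq]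

lemma maxSeqNorm_matVec_le (β : Matrix (Fin m) (Fin n) ℂ) (x : Fin n → E) :
    maxSeqNorm m (matVec β x) ≤ ‖β‖ * maxSeqNorm n x := by
  refine le_of_forall_pos_le_of_continuous (f := fun ε => ‖β‖ * (maxSeqNorm n x + ε))
    (by fun_prop) (by simp) fun ε hε => ?_
  obtain ⟨k, α, y, hx, hα, hy⟩ := exists_eq_matVec_of_norm_le_one x hε
  calc maxSeqNorm m (matVec β x) ≤ ‖β * α‖ * ‖toLp 2 y‖ :=
        maxSeqNorm_le_of_eq_matVec (by rw [hx, matVec_mul])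
    _ ≤ ‖β‖ * ‖toLp 2 y‖ := by
        gcongr
        exact (l2_opNorm_mul β α).trans (mul_le_of_le_one_right (norm_nonneg β) hα)
    _ ≤ ‖β‖ * (maxSeqNorm n x + ε) := by gcongr

lemma maxSeqNorm_append_sq (x : Fin m → E) (x' : Fin n → E) :
    maxSeqNorm (m + n) (Fin.append x x') ^ 2 ≤ maxSeqNorm m x ^ 2 + maxSeqNorm n x' ^ 2 := by
  refine le_of_forall_pos_le_of_continuous
    (f := fun ε => (maxSeqNorm m x + ε) ^ 2 + (maxSeqNorm n x' + ε) ^ 2) (by fun_prop) (by simp)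
    fun ε hε => ?_
  obtain ⟨k, α, y, rfl, hα, hy⟩ := exists_eq_matVec_of_norm_le_one x hε
  obtain ⟨k', α', y', rfl, hα', hy'⟩ := exists_eq_matVec_of_norm_le_one x' hε
  have hfac : Fin.append (matVec α y) (matVec α' y')
      = matVec (vcat (hcat α 0) (hcat 0 α')) (Fin.append y y') := by
    rw [vcat_matVec, hcat_matVec, hcat_matVec, matVec_zero, matVec_zero, add_zero, zero_add]
  calc maxSeqNorm (m + n) (Fin.append (matVec α y) (matVec α' y')) ^ 2
      ≤ ‖toLp 2 (Fin.append y y')‖ ^ 2 := by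
        gcongr
        · exact maxSeqNorm_nonneg _
        · exact maxSeqNorm_le_of_norm_le_one hfac
            ((l2_opNorm_blockDiag_le α α').trans (max_le hα hα'))
    _ = ‖toLp 2 y‖ ^ 2 + ‖toLp 2 y'‖ ^ 2 := norm_toLp_append_sq y y'
    _ ≤ _ := by gcongr

end MaxSeqNorm

/-- the maximal operator sequence norms form a sequential norm over `E`. -/
theorem maxSeqNorm_isSeqNorm (E : Type*) [NormedAddCommGroup E] [NormedSpace ℂ E] :
    ∃ S : SeqNorm E, ∀ (n : ℕ) (x : Fin n → E), S.N n x = maxSeqNorm n x := by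
  refine ⟨{ N := maxSeqNorm
            norm_one := maxSeqNorm_fin_one
            add_le := fun _ =>
              add_le_of_append_sq maxSeqNorm_matVec_le maxSeqNorm_nonneg maxSeqNorm_append_sq
            smul_eq := fun _ => smul_eq_of_matVec_le maxSeqNorm_matVec_le maxSeqNorm_nonneg
            eq_zero := fun _ x hx => funext fun i =>
              norm_le_zero_iff.mp (hx ▸ norm_apply_le_maxSeqNorm x i)
            append_zero := fun _ _ =>
              append_zero_of_matVec_le maxSeqNorm_matVec_le maxSeqNorm_nonneg
            append_sq := fun _ _ => maxSeqNorm_append_sq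
            matrix_le := fun _ _ => maxSeqNorm_matVec_le }, fun _ _ => rfl⟩
end
end
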